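/- The complex Waring rank of the cubic form x₀(x₁² + x₂² + … + xₙ²) ∈ ℂ[x₀,…,xₙ] is exactly 2n. -/

import Mathlib

/-!
Upper bound: `(c x₀ + e xⱼ)³ + (c x₀ - e xⱼ)³ = 2c³x₀³ + 6ce²x₀xⱼ²`, so nonzero `cⱼ` with
`∑ cⱼ³ = 0` and `6cⱼeⱼ² = 1` write the form as a sum of `2n` cubes.

Lower bound: write the `k`-th linear form as `αₖ x₀ + (W u)ₖ` with `u = (x₁, …, xₙ)`.
Polarizing `x₀ (u ⬝ u) = ∑ₖ (αₖ x₀ + (W u)ₖ)³` gives `3 Wᵀ diag(α) W = 1`, so `W` has rank `n`,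
and `Wᵀ ((W u)²) = 0`, so the coordinatewise squares of the column space of `W` lie in `ker Wᵀ`,
of dimension `s - n`. These squares span a space of dimension at least `rank W`: on `rank W`
independent rows `W` is onto, and the preimages of the standard basis vectors square to
standard basis vectors. Hence `n ≤ s - n`.
-/

open MvPolynomial

/-- `L` is a linear form (a `ℂ`-linear combination of the variables). -/
def IsLinearForm {n : ℕ} (L : MvPolynomial (Fin (n + 1)) ℂ) : Prop :=
  ∃ a : Fin (n + 1) → ℂ, L = ∑ i, C (a i) * X i

open Module Matrix

namespace Matrix

variable {K m n : Type*} [Field K] [Fintype m] [Fintype n]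

theorem rank_le_finrank_span_mulVec_mul_self (W : Matrix m n K) :
    W.rank ≤ finrank K (Submodule.span K (Set.range fun v => W *ᵥ v * W *ᵥ v)) := by
  classical
  obtain ⟨κ, k, hk, hspan, hli⟩ := exists_linearIndependent' K W.row
  have : Fintype κ := Fintype.ofInjective k hk
  have hsurj : Function.Surjective (W.submatrix k id).mulVecLin := by
    rw [← LinearMap.range_eq_top]
    apply Submodule.eq_top_of_finrank_eq
    rw [finrank_fintype_fun_eq_card]
    exact LinearIndependent.rank_matrix (M := W.submatrix k id) hli
  choose v hv using fun j => hsurj (Pi.single j 1)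
  have hli_sq : LinearIndependent K fun j => W *ᵥ v j * W *ᵥ v j := by
    refine LinearIndependent.of_comp (LinearMap.funLeft K K k) ?_
    convert Pi.linearIndependent_single_one κ K with j
    ext i
    have hi : (W *ᵥ v j) (k i) = (Pi.single j 1 : κ → K) i := congrFun (hv j) i
    simp [hi, Pi.single_apply]
  calc W.rank = Fintype.card κ := by
        rw [rank_eq_finrank_span_row, ← hspan, finrank_span_eq_card hli]
    _ = finrank K (Submodule.span K (Set.range fun j => W *ᵥ v j * W *ᵥ v j)) :=
        linearIndependent_iff_card_eq_finrank_span.mp hli_sq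
    _ ≤ _ := Submodule.finrank_mono <| Submodule.span_mono <|
        Set.range_comp_subset_range v fun v => W *ᵥ v * W *ᵥ v

theorem two_mul_rank_le_card_of_transpose_mulVec_mul_self_eq_zero (W : Matrix m n K)
    (hW : ∀ v, Wᵀ *ᵥ (W *ᵥ v * W *ᵥ v) = 0) : 2 * W.rank ≤ Fintype.card m := by
  have hker :
      Submodule.span K (Set.range fun v => W *ᵥ v * W *ᵥ v) ≤ LinearMap.ker Wᵀ.mulVecLin :=
    Submodule.span_le.mpr <| Set.range_subset_iff.mpr hW
  have := LinearMap.finrank_range_add_finrank_ker Wᵀ.mulVecLin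
  rw [finrank_fintype_fun_eq_card, ← Matrix.rank, rank_transpose] at this
  have := W.rank_le_finrank_span_mulVec_mul_self.trans (Submodule.finrank_mono hker)
  omega

end Matrix

section SumOfCubes

variable {K m n : Type*} [Field K] [CharZero K] [Fintype m] [Fintype n]
  {α : m → K} {W : Matrix m n K}

theorem three_mul_sum_mul_mulVec_mul_mulVec
    (h : ∀ t u, t * (u ⬝ᵥ u) = ∑ k, (α k * t + (W *ᵥ u) k) ^ 3) (u v : n → K) :
    3 * ∑ k, α k * (W *ᵥ u) k * (W *ᵥ v) k = u ⬝ᵥ v := by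
  -- evaluating at `t = ±1` and `u ± v` keeps only the part of the cubic odd in both `t` and `v`
  have key : (24 : K) * ∑ k, α k * (W *ᵥ u) k * (W *ᵥ v) k = 8 * (u ⬝ᵥ v) :=
    calc (24 : K) * ∑ k, α k * (W *ᵥ u) k * (W *ᵥ v) k
        = ∑ k, ((α k * 1 + (W *ᵥ (u + v)) k) ^ 3 - (α k * 1 + (W *ᵥ (u - v)) k) ^ 3
            - (α k * (-1) + (W *ᵥ (u + v)) k) ^ 3 + (α k * (-1) + (W *ᵥ (u - v)) k) ^ 3) := by
          rw [Finset.mul_sum]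
          refine Finset.sum_congr rfl fun k _ => ?_
          simp only [mulVec_add, mulVec_sub, Pi.add_apply, Pi.sub_apply]
          ring
      _ = 1 * ((u + v) ⬝ᵥ (u + v)) - 1 * ((u - v) ⬝ᵥ (u - v))
            - (-1) * ((u + v) ⬝ᵥ (u + v)) + (-1) * ((u - v) ⬝ᵥ (u - v)) := by
          simp only [h, Finset.sum_add_distrib, Finset.sum_sub_distrib]
      _ = 8 * (u ⬝ᵥ v) := by
          simp only [add_dotProduct, dotProduct_add, sub_dotProduct, dotProduct_sub,
            dotProduct_comm v u]
          ring
  linear_combination key / 8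

theorem mulVec_injective_of_sum_cubes
    (h : ∀ t u, t * (u ⬝ᵥ u) = ∑ k, (α k * t + (W *ᵥ u) k) ^ 3) :
    Function.Injective W.mulVecLin := by
  rw [← LinearMap.ker_eq_bot, LinearMap.ker_eq_bot']
  intro u hu
  refine dotProduct_eq_zero u fun v => ?_
  rw [← three_mul_sum_mul_mulVec_mul_mulVec h]
  simp [show W *ᵥ u = 0 from hu]

theorem transpose_mulVec_mulVec_mul_self_eq_zero
    (h : ∀ t u, t * (u ⬝ᵥ u) = ∑ k, (α k * t + (W *ᵥ u) k) ^ 3) (u : n → K) :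
    Wᵀ *ᵥ (W *ᵥ u * W *ᵥ u) = 0 := by
  classical
  refine funext fun i => ?_
  set r : n → K := Pi.single i 1
  have key : (6 : K) * ∑ k, (W *ᵥ u) k * (W *ᵥ u) k * (W *ᵥ r) k = 0 :=
    calc (6 : K) * ∑ k, (W *ᵥ u) k * (W *ᵥ u) k * (W *ᵥ r) k
        = ∑ k, ((α k * 0 + (W *ᵥ (u + r)) k) ^ 3 - (α k * 0 + (W *ᵥ (u - r)) k) ^ 3
            - 2 * (α k * 0 + (W *ᵥ r) k) ^ 3) := by
          rw [Finset.mul_sum]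
          refine Finset.sum_congr rfl fun k _ => ?_
          simp only [mulVec_add, mulVec_sub, Pi.add_apply, Pi.sub_apply]
          ring
      _ = 0 * ((u + r) ⬝ᵥ (u + r)) - 0 * ((u - r) ⬝ᵥ (u - r)) - 2 * (0 * (r ⬝ᵥ r)) := by
          simp only [h, Finset.sum_sub_distrib, Finset.mul_sum]
      _ = 0 := by ring
  have hcoord : (Wᵀ *ᵥ (W *ᵥ u * W *ᵥ u)) i = ∑ k, (W *ᵥ u) k * (W *ᵥ u) k * (W *ᵥ r) k := by
    simp [r, mulVec_transpose, vecMul, dotProduct]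
  rw [hcoord]
  simpa using key

theorem two_mul_card_le_of_sum_cubes
    (h : ∀ t u, t * (u ⬝ᵥ u) = ∑ k, (α k * t + (W *ᵥ u) k) ^ 3) :
    2 * Fintype.card n ≤ Fintype.card m := by
  have hrank : W.rank = Fintype.card n := by
    rw [Matrix.rank, LinearMap.finrank_range_of_inj (mulVec_injective_of_sum_cubes h),
      finrank_fintype_fun_eq_card]
  rw [← hrank]
  exact W.two_mul_rank_le_card_of_transpose_mulVec_mul_self_eq_zero
    (transpose_mulVec_mulVec_mul_self_eq_zero h)

end SumOfCubes

theorem isLinearForm_X {n : ℕ} (i : Fin (n + 1)) : IsLinearForm (X i : MvPolynomial _ ℂ) :=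
  ⟨Pi.single i 1, by simp [Pi.single_apply]⟩

theorem IsLinearForm.add {n : ℕ} {L M : MvPolynomial (Fin (n + 1)) ℂ} (hL : IsLinearForm L)
    (hM : IsLinearForm M) : IsLinearForm (L + M) := by
  obtain ⟨a, rfl⟩ := hL
  obtain ⟨b, rfl⟩ := hM
  exact ⟨a + b, by simp [add_mul, Finset.sum_add_distrib]⟩

theorem IsLinearForm.C_mul {n : ℕ} {L : MvPolynomial (Fin (n + 1)) ℂ} (hL : IsLinearForm L)
    (c : ℂ) : IsLinearForm (C c * L) := by
  obtain ⟨a, rfl⟩ := hL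
  exact ⟨c • a, by simp [Finset.mul_sum, mul_assoc]⟩

theorem exists_ne_zero_sum_pow_three_eq_zero {K : Type*} [Field K] [IsAlgClosed K] [CharZero K]
    {n : ℕ} (hn : 2 ≤ n) : ∃ c : Fin n → K, (∀ j, c j ≠ 0) ∧ ∑ j, c j ^ 3 = 0 := by
  obtain ⟨m, rfl⟩ : ∃ m, n = m + 1 := ⟨n - 1, by omega⟩
  obtain ⟨z, hz⟩ := IsAlgClosed.exists_pow_nat_eq (-m : K) three_pos
  have hz0 : z ≠ 0 := by
    rintro rfl
    have : (m : K) = 0 := by linear_combination hz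
    norm_cast at this
    omega
  refine ⟨Fin.cons z 1, fun j => Fin.cases hz0 (fun _ => one_ne_zero) j, ?_⟩
  simp [Fin.sum_univ_succ, hz]

theorem exists_linearForms_sum_cubes_eq {n : ℕ} (hn : 2 ≤ n) :
    ∃ L : Fin (2 * n) → MvPolynomial (Fin (n + 1)) ℂ, (∀ k, IsLinearForm (L k)) ∧
      (X 0 * ∑ i : Fin (n + 1), if i = 0 then 0 else X i ^ 2) = ∑ k, L k ^ 3 := by
  obtain ⟨c, hc0, hc⟩ := exists_ne_zero_sum_pow_three_eq_zero (K := ℂ) hn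
  choose e he using fun j => IsAlgClosed.exists_pow_nat_eq (6 * c j)⁻¹ two_pos
  let M : Fin 2 × Fin n → MvPolynomial (Fin (n + 1)) ℂ := fun p =>
    C (c p.2) * X 0 + C (![1, -1] p.1 * e p.2) * X p.2.succ
  refine ⟨fun k => M (finProdFinEquiv.symm k),
    fun k => ((isLinearForm_X 0).C_mul _).add ((isLinearForm_X _).C_mul _), ?_⟩
  have hpair (j : Fin n) :
      M (0, j) ^ 3 + M (1, j) ^ 3 = C (2 * c j ^ 3) * X 0 ^ 3 + X 0 * X j.succ ^ 2 := by
    have h6 : C (6 * c j * e j ^ 2) = (1 : MvPolynomial (Fin (n + 1)) ℂ) := by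
      rw [he, mul_inv_cancel₀ (mul_ne_zero (by norm_num) (hc0 j)), C_1]
    simp only [M, Matrix.cons_val_zero, Matrix.cons_val_one, map_mul, map_neg, map_one, map_pow,
      map_ofNat] at h6 ⊢
    linear_combination (X 0 * X j.succ ^ 2) * h6
  rw [finProdFinEquiv.symm.sum_comp (fun p => M p ^ 3), Fintype.sum_prod_type_right]
  simp only [Fin.sum_univ_two, hpair, Finset.sum_add_distrib, ← Finset.sum_mul, ← map_sum,
    ← Finset.mul_sum, hc, mul_zero, map_zero, zero_mul, zero_add]
  simp [Fin.sum_univ_succ]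

theorem two_mul_le_of_linearForms_sum_cubes_eq {n s : ℕ}
    (L : Fin s → MvPolynomial (Fin (n + 1)) ℂ) (hL : ∀ k, IsLinearForm (L k))
    (hF : (X 0 * ∑ i : Fin (n + 1), if i = 0 then 0 else X i ^ 2) = ∑ k, L k ^ 3) :
    2 * n ≤ s := by
  choose a ha using hL
  have h (t : ℂ) (u : Fin n → ℂ) :
      t * (u ⬝ᵥ u) = ∑ k, (a k 0 * t + (Matrix.of (fun k j => a k j.succ) *ᵥ u) k) ^ 3 := by
    simpa [ha, Fin.sum_univ_succ, dotProduct, Matrix.mulVec, sq] using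
      congrArg (eval (Fin.cons t u)) hF
  simpa using two_mul_card_le_of_sum_cubes h

theorem stmt_12 (n : ℕ) (hn : 2 ≤ n)
    (F : MvPolynomial (Fin (n + 1)) ℂ)
    (hF : F = X 0 * ∑ i : Fin (n + 1), if i = 0 then 0 else X i ^ 2) :
    (∃ L : Fin (2 * n) → MvPolynomial (Fin (n + 1)) ℂ,
      (∀ k, IsLinearForm (L k)) ∧ F = ∑ k, L k ^ 3) ∧
    (∀ (s : ℕ) (L : Fin s → MvPolynomial (Fin (n + 1)) ℂ),
      (∀ k, IsLinearForm (L k)) → F = ∑ k, L k ^ 3 → 2 * n ≤ s) := by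
  subst hF
  exact ⟨exists_linearForms_sum_cubes_eq hn,
    fun s L hL hsum => two_mul_le_of_linearForms_sum_cubes_eq L hL hsum⟩
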